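/- arXiv:2006.15439 — 7 statements merged into one kernel-verified Lean document; each statement's English description precedes it below -/
import Mathlib

section
/- For every prime p and every integer n ≥ 1, the p-adic valuation of Ḡ_n := ∏_{k=0}^{n} C(n,k) equals (2/(p-1))·S_p(n) − ((n-1)/(p-1))·d_p(n), where d_p(n) is the base-p digit sum of n and S_p(n) = Σ_{j=0}^{n-1} d_p(j). -/
/-! Legendre's formula `(p - 1) ν_p(n!) = n - d_p(n)` gives Kummer's identity
`(p - 1) ν_p(C(n, k)) = d_p(k) + d_p(n - k) - d_p(n)` over `ℤ`, with no truncated subtraction.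
Summing over `0 ≤ k ≤ n` and reflecting `k ↦ n - k`, the digit sums of `k` and of `n - k`
each contribute `S_p(n) + d_p(n)`, while `d_p(n)` is subtracted `n + 1` times. -/

open Finset Nat

namespace padicValNat

variable {p : ℕ} [Fact p.Prime]

protected theorem prod {ι : Type*} {s : Finset ι} {f : ι → ℕ} (hf : ∀ i ∈ s, f i ≠ 0) :
    padicValNat p (∏ i ∈ s, f i) = ∑ i ∈ s, padicValNat p (f i) := by
  simp only [← factorization_def _ Fact.out, factorization_prod_apply hf]

theorem sub_one_mul_factorial_int (n : ℕ) :
    ((p : ℤ) - 1) * padicValNat p n ! = n - (p.digits n).sum := by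
  have hp : 1 ≤ p := (Fact.out : p.Prime).one_le
  have := congrArg (Nat.cast : ℕ → ℤ) (sub_one_mul_padicValNat_factorial (p := p) n)
  rwa [Nat.cast_mul, Nat.cast_sub hp, Nat.cast_sub (digit_sum_le p n), Nat.cast_one] at this

theorem factorial_eq_choose_add_factorial_add_factorial {k n : ℕ} (h : k ≤ n) :
    padicValNat p n ! =
      padicValNat p (n.choose k) + padicValNat p k ! + padicValNat p (n - k)! := by
  have hchoose : n.choose k ≠ 0 := (choose_pos h).ne'
  rw [← choose_mul_factorial_mul_factorial h,
    padicValNat.mul (mul_ne_zero hchoose (factorial_ne_zero _)) (factorial_ne_zero _),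
    padicValNat.mul hchoose (factorial_ne_zero _)]

theorem sub_one_mul_choose_int {k n : ℕ} (h : k ≤ n) :
    ((p : ℤ) - 1) * padicValNat p (n.choose k) =
      (p.digits k).sum + (p.digits (n - k)).sum - (p.digits n).sum := by
  have hfac := congrArg (fun v : ℕ ↦ ((p : ℤ) - 1) * v)
    (factorial_eq_choose_add_factorial_add_factorial (p := p) h)
  simp only [Nat.cast_add, mul_add, sub_one_mul_factorial_int, Nat.cast_sub h] at hfac
  linarith

theorem sub_one_mul_prod_choose_int (n : ℕ) :
    ((p : ℤ) - 1) * padicValNat p (∏ k ∈ range (n + 1), n.choose k) =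
      2 * ∑ j ∈ range n, ((p.digits j).sum : ℤ) - ((n : ℤ) - 1) * (p.digits n).sum := by
  have hmem {k : ℕ} (hk : k ∈ range (n + 1)) : k ≤ n := Nat.lt_succ_iff.mp (mem_range.mp hk)
  have hreflect : ∑ k ∈ range (n + 1), ((p.digits (n - k)).sum : ℤ) =
      ∑ k ∈ range (n + 1), ((p.digits k).sum : ℤ) :=
    sum_range_reflect (fun j ↦ ((p.digits j).sum : ℤ)) (n + 1)
  rw [padicValNat.prod fun k hk ↦ (choose_pos (hmem hk)).ne', Nat.cast_sum, mul_sum,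
    sum_congr rfl fun k hk ↦ sub_one_mul_choose_int (hmem hk), sum_sub_distrib,
    sum_add_distrib, hreflect, sum_const, card_range, sum_range_succ, nsmul_eq_mul]
  push_cast
  ring

end padicValNat

theorem padicValNat_binomial_product_general (p n : ℕ) (hp : p.Prime) :
    (padicValNat p (∏ k ∈ Finset.range (n + 1), n.choose k) : ℚ) =
      2 / ((p : ℚ) - 1) * (∑ j ∈ Finset.range n, ((Nat.digits p j).sum : ℚ))
        - ((n : ℚ) - 1) / ((p : ℚ) - 1) * ((Nat.digits p n).sum : ℚ) := by
  have : Fact p.Prime := ⟨hp⟩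
  have hp1 : (p : ℚ) - 1 ≠ 0 := sub_ne_zero.mpr (by exact_mod_cast hp.one_lt.ne')
  have key := congrArg (Int.cast : ℤ → ℚ) (padicValNat.sub_one_mul_prod_choose_int (p := p) n)
  simp only [Int.cast_mul, Int.cast_sub, Int.cast_natCast, Int.cast_one, Int.cast_ofNat,
    Int.cast_sum] at key
  field_simp
  linarith

theorem padicValNat_binomial_product (p n : ℕ) (hp : p.Prime) (hn : 1 ≤ n) :
    (padicValNat p (∏ k ∈ Finset.range (n + 1), n.choose k) : ℚ) =
      2 / ((p : ℚ) - 1) * (∑ j ∈ Finset.range n, ((Nat.digits p j).sum : ℚ))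
        - ((n : ℚ) - 1) / ((p : ℚ) - 1) * ((Nat.digits p n).sum : ℚ) :=
  padicValNat_binomial_product_general p n hp
end

section
/- For every base b ≥ 2 and every integer n ≥ 1, the running digit sum satisfies S_b(n) ≤ ((b−1)/2)·n·log_b(n), i.e. S_b(n)·log b ≤ ((b−1)/2)·n·log n. -/
/-!
Split `n = b ^ m * c + r` at its leading digit `c`, so `1 ≤ c < b` and `r < b ^ m`. Counting digits
block by block gives `S(n) = c S(b^m) + C(c,2) b^m + c r + S(r)` and `S(b^m) = m (b-1)/2 · b^m`.
Writing `r = b^m t` with `0 ≤ t < 1` and applying the bound to `r` by induction, the terms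
`m log b` cancel on both sides. What is left only involves `c` and `t`: the function
`t ↦ (c+t) log(c+t) - t log t` is concave, so on `[0,1]` it lies above its chord, and the
values at `t = 0` and `t = 1` are handled by concavity of `log` between `1` and `b`.
-/

open Finset Real

theorem Nat.digits_sum_add_base_pow_mul {b m i : ℕ} (hb : 1 < b) (hi : i < b ^ m) (q : ℕ) :
    (b.digits (i + b ^ m * q)).sum = (b.digits i).sum + (b.digits q).sum := by
  rcases q.eq_zero_or_pos with rfl | hq
  · simp
  have hlen : (b.digits i).length ≤ m := (Nat.digits_length_le_iff hb i).2 hi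
  rw [← Nat.add_sub_cancel' hlen, ← Nat.digits_append_zeroes_append_digits hb hq]
  simp

theorem Nat.digits_sum_of_lt {b c : ℕ} (hc : c < b) : (b.digits c).sum = c := by
  rcases c.eq_zero_or_pos with rfl | hc0
  · simp
  · simp [Nat.digits_of_lt b c hc0.ne' hc]

def runningDigitSum (b n : ℕ) : ℕ := ∑ j ∈ range n, (b.digits j).sum

section runningDigitSum

variable {b : ℕ}

theorem runningDigitSum_base_pow_mul_add (hb : 1 < b) {m r : ℕ} (hr : r ≤ b ^ m) (q : ℕ) :
    runningDigitSum b (b ^ m * q + r) =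
      runningDigitSum b (b ^ m * q) + r * (b.digits q).sum + runningDigitSum b r := by
  have hblock : ∀ i ∈ range r,
      (b.digits (b ^ m * q + i)).sum = (b.digits q).sum + (b.digits i).sum := fun i hi => by
    rw [add_comm, Nat.digits_sum_add_base_pow_mul hb ((mem_range.1 hi).trans_le hr), add_comm]
  rw [runningDigitSum, sum_range_add, sum_congr rfl hblock, sum_add_distrib, sum_const, card_range,
    smul_eq_mul, add_assoc]
  rfl

theorem runningDigitSum_base_pow_mul (hb : 1 < b) (m : ℕ) {c : ℕ} (hc : c ≤ b) :
    runningDigitSum b (b ^ m * c) = c * runningDigitSum b (b ^ m) + c.choose 2 * b ^ m := by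
  induction c with
  | zero => simp [runningDigitSum]
  | succ c ih =>
    rw [mul_add_one, runningDigitSum_base_pow_mul_add hb le_rfl, ih (by omega),
      Nat.digits_sum_of_lt (by omega), Nat.choose_succ_succ', Nat.choose_one_right]
    ring

theorem runningDigitSum_base_pow_mul_add_of_lt (hb : 1 < b) {m c r : ℕ} (hc : c < b)
    (hr : r < b ^ m) :
    runningDigitSum b (b ^ m * c + r) =
      c * runningDigitSum b (b ^ m) + c.choose 2 * b ^ m + r * c + runningDigitSum b r := by
  rw [runningDigitSum_base_pow_mul_add hb hr.le, runningDigitSum_base_pow_mul hb m hc.le,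
    Nat.digits_sum_of_lt hc]

theorem base_mul_runningDigitSum_base_pow (hb : 1 < b) (m : ℕ) :
    b * runningDigitSum b (b ^ m) = m * b.choose 2 * b ^ m := by
  induction m with
  | zero => simp [runningDigitSum]
  | succ m ih =>
    rw [pow_succ, runningDigitSum_base_pow_mul hb m le_rfl, mul_add, ← mul_assoc, mul_comm b b,
      mul_assoc, ih]
    ring

theorem runningDigitSum_base_pow_cast (hb : 1 < b) (m : ℕ) :
    (runningDigitSum b (b ^ m) : ℝ) = m * (b - 1) / 2 * b ^ m := by
  have h := congrArg (Nat.cast (R := ℝ)) (base_mul_runningDigitSum_base_pow hb m)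
  push_cast [Nat.cast_choose_two] at h
  have hb0 : (b : ℝ) ≠ 0 := by positivity
  apply mul_left_cancel₀ hb0
  rw [h]
  ring

end runningDigitSum

theorem Real.sub_one_mul_log_le {b d : ℝ} (hd : 1 ≤ d) (hdb : d ≤ b) :
    (d - 1) * log b ≤ (b - 1) * log d := by
  rcases hd.eq_or_lt with rfl | hd
  · simp
  rcases hdb.eq_or_lt with rfl | hdb
  · rfl
  have h := strictConcaveOn_log_Ioi.concaveOn.neg.secant_mono_aux1 (x := 1)
    (Set.mem_Ioi.2 one_pos) (Set.mem_Ioi.2 (by linarith)) hd hdb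
  simp only [Pi.neg_apply, log_one, neg_zero, mul_zero, zero_add, mul_neg] at h
  linarith

theorem Real.log_le_log_add_sub_div {x y : ℝ} (hx : 0 < x) (hy : 0 < y) :
    log y ≤ log x + (y - x) / x := by
  have h := log_le_sub_one_of_pos (div_pos hy hx)
  rw [log_div hy.ne' hx.ne'] at h
  rw [sub_div, div_self hx.ne']
  linarith

theorem Real.mul_log_le_mul_sub_one {t : ℝ} (ht : 0 ≤ t) : t * log t ≤ t * (t - 1) := by
  rcases ht.eq_or_lt with rfl | ht
  · simp
  · exact mul_le_mul_of_nonneg_left (log_le_sub_one_of_pos ht) ht.le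

theorem Real.mul_log_mul_of_pos {B x : ℝ} (hB : 0 < B) (hx : 0 ≤ x) :
    B * x * log (B * x) = B * x * log B + B * (x * log x) := by
  rcases hx.eq_or_lt with rfl | hx
  · simp
  · rw [log_mul hB.ne' hx.ne']
    ring

theorem Real.chord_le_mul_log_add_sub_mul_log {c t : ℝ} (hc : 1 ≤ c) (ht0 : 0 ≤ t)
    (ht1 : t ≤ 1) :
    (1 - t) * c * log c + t * (c + 1) * log (c + 1) ≤ (c + t) * log (c + t) - t * log t := by
  have hct : 0 < c + t := by linarith
  have hlogc := log_le_log_add_sub_div hct (by linarith : 0 < c)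
  have hlogc1 := log_le_log_add_sub_div hct (by linarith : 0 < c + 1)
  have hrem : t * (1 - t) / (c + t) ≤ -(t * log t) := calc
    t * (1 - t) / (c + t) ≤ t * (1 - t) := div_le_self (by nlinarith) (by linarith)
    _ ≤ -(t * log t) := by linarith [mul_log_le_mul_sub_one ht0]
  calc (1 - t) * c * log c + t * (c + 1) * log (c + 1)
      ≤ (1 - t) * c * (log (c + t) + (c - (c + t)) / (c + t))
        + t * (c + 1) * (log (c + t) + (c + 1 - (c + t)) / (c + t)) :=
        add_le_add (mul_le_mul_of_nonneg_left hlogc (by nlinarith))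
          (mul_le_mul_of_nonneg_left hlogc1 (by nlinarith))
    _ = (c + t) * log (c + t) + t * (1 - t) / (c + t) := by field_simp; ring
    _ ≤ (c + t) * log (c + t) - t * log t := by linarith

-- What remains of the bound at `n = b ^ m * (c + t)` once the terms in `m * log b` cancel.
theorem Real.leading_digit_term_le {b c t : ℝ} (hc : 1 ≤ c) (hcb : c + 1 ≤ b) (ht0 : 0 ≤ t)
    (ht1 : t ≤ 1) :
    (c * (c - 1) / 2 + c * t) * log b + (b - 1) / 2 * (t * log t) ≤
      (b - 1) / 2 * ((c + t) * log (c + t)) := by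
  have hlogc := sub_one_mul_log_le hc (by linarith : c ≤ b)
  have hlogc1 : c * log b ≤ (b - 1) * log (c + 1) := by
    simpa using sub_one_mul_log_le (by linarith : 1 ≤ c + 1) hcb
  have hchord := chord_le_mul_log_add_sub_mul_log hc ht0 ht1
  have hlead : (c * (c - 1) / 2 + c * t) * log b ≤
      (b - 1) / 2 * ((c + t) * log (c + t) - t * log t) := calc
    (c * (c - 1) / 2 + c * t) * log b
      = ((1 - t) * c * ((c - 1) * log b) + t * (c + 1) * (c * log b)) / 2 := by ring
    _ ≤ ((1 - t) * c * ((b - 1) * log c) + t * (c + 1) * ((b - 1) * log (c + 1))) / 2 := by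
        gcongr ?_ / 2
        exact add_le_add (mul_le_mul_of_nonneg_left hlogc (by nlinarith))
          (mul_le_mul_of_nonneg_left hlogc1 (by nlinarith))
    _ = (b - 1) / 2 * ((1 - t) * c * log c + t * (c + 1) * log (c + 1)) := by ring
    _ ≤ (b - 1) / 2 * ((c + t) * log (c + t) - t * log t) := by
        gcongr
        linarith
  linarith

theorem runningDigitSum_mul_log_le {b : ℕ} (hb : 1 < b) (n : ℕ) :
    (runningDigitSum b n : ℝ) * log b ≤ ((b : ℝ) - 1) / 2 * n * log n := by
  induction n using Nat.strong_induction_on with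
  | _ n ih =>
  rcases n.eq_zero_or_pos with rfl | hn
  · simp [runningDigitSum]
  set m := Nat.log b n
  set c := n / b ^ m
  set r := n % b ^ m
  have hB : 0 < b ^ m := by positivity
  have hBn : b ^ m ≤ n := Nat.pow_log_le_self b hn.ne'
  have hc1 : 1 ≤ c := (Nat.one_le_div_iff hB).2 hBn
  have hcb : c < b :=
    Nat.div_lt_of_lt_mul (by rw [← pow_succ]; exact Nat.lt_pow_succ_log_self hb n)
  have hr : r < b ^ m := Nat.mod_lt n hB
  have hn_eq : b ^ m * c + r = n := Nat.div_add_mod n (b ^ m)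
  have ih_r := ih r (hr.trans_le hBn)
  set B : ℝ := (b : ℝ) ^ m with hB_def
  set t : ℝ := r / B
  have hBpos : (0 : ℝ) < B := by positivity
  have ht0 : 0 ≤ t := by positivity
  have ht1 : t ≤ 1 := by rw [div_le_one hBpos, hB_def]; exact_mod_cast hr.le
  have hrt : (r : ℝ) = B * t := (mul_div_cancel₀ _ hBpos.ne').symm
  have hnt : (n : ℝ) = B * (c + t) := by rw [← hn_eq]; push_cast; rw [hrt]; ring
  have hlogB : log B = m * log b := log_pow _ _
  have hlead := mul_le_mul_of_nonneg_left (Real.leading_digit_term_le (b := b) (c := c) (t := t)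
    (by exact_mod_cast hc1) (by exact_mod_cast hcb) ht0 ht1) hBpos.le
  rw [hrt, mul_assoc, mul_log_mul_of_pos hBpos ht0, hlogB] at ih_r
  rw [← hn_eq, runningDigitSum_base_pow_mul_add_of_lt hb hcb hr, hn_eq, hnt, mul_assoc,
    mul_log_mul_of_pos hBpos (by positivity), hlogB]
  push_cast [Nat.cast_choose_two, runningDigitSum_base_pow_cast hb, hrt]
  rw [← hB_def]
  linarith

theorem running_digit_sum_le_general (b n : ℕ) (hb : 2 ≤ b) :
    ((∑ j ∈ Finset.range n, (Nat.digits b j).sum : ℕ) : ℝ) * Real.log b ≤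
      ((b : ℝ) - 1) / 2 * n * Real.log n :=
  runningDigitSum_mul_log_le hb n

theorem running_digit_sum_le (b n : ℕ) (hb : 2 ≤ b) (hn : 1 ≤ n) :
    ((∑ j ∈ Finset.range n, (Nat.digits b j).sum : ℕ) : ℝ) * Real.log b ≤
      ((b : ℝ) - 1) / 2 * n * Real.log n :=
  running_digit_sum_le_general b n hb
end

section
/- For every base b ≥ 2 and every integer k ≥ 1, S_b(b^k) = ((b−1)/2)·k·b^k, so equality holds in the Drazin–Griffith inequality S_b(n) ≤ ((b−1)/2)·n·log_b(n) when n = b^k. -/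
lemma ds_split (b q r : ℕ) (hb : 2 ≤ b) (hr : r < b) :
    (Nat.digits b (b * q + r)).sum = r + (Nat.digits b q).sum := by
  rcases Nat.eq_zero_or_pos (b * q + r) with h | h
  · have hq : q = 0 := by
      rcases Nat.eq_zero_or_pos q with h' | h'
      · exact h'
      · exfalso; nlinarith
    have hr0 : r = 0 := by omega
    simp [hq, hr0]
  · rw [Nat.digits_def' hb h, List.sum_cons]
    have h1 : (b * q + r) % b = r := by
      rw [Nat.mul_add_mod, Nat.mod_eq_of_lt hr]
    have h2 : (b * q + r) / b = q := by
      rw [Nat.mul_add_div (by omega), Nat.div_eq_of_lt hr, Nat.add_zero]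
    rw [h1, h2]

lemma sum_range_mul {M : Type*} [AddCommMonoid M] (f : ℕ → M) (n b : ℕ) :
    ∑ j ∈ Finset.range (n * b), f j
      = ∑ q ∈ Finset.range n, ∑ r ∈ Finset.range b, f (b * q + r) := by
  induction n with
  | zero => simp
  | succ n ih =>
    rw [Nat.succ_mul, Finset.sum_range_add, ih, Finset.sum_range_succ]
    congr 1
    refine Finset.sum_congr rfl fun r _ => ?_
    ring_nf

theorem running_digit_sum_pow (b k : ℕ) (hb : 2 ≤ b) (hk : 1 ≤ k) :
    ((∑ j ∈ Finset.range (b ^ k), (Nat.digits b j).sum : ℕ) : ℚ) =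
      ((b : ℚ) - 1) / 2 * k * (b : ℚ) ^ k := by
  clear hk
  have hgauss : ((∑ r ∈ Finset.range b, r : ℕ) : ℚ) = (b : ℚ) * ((b : ℚ) - 1) / 2 := by
    have := Finset.sum_range_id_mul_two b
    have hb1 : (1 : ℕ) ≤ b := by omega
    have hcast : ((∑ i ∈ Finset.range b, i : ℕ) : ℚ) * 2 = (b : ℚ) * ((b : ℚ) - 1) := by
      calc ((∑ i ∈ Finset.range b, i : ℕ) : ℚ) * 2
          = (((∑ i ∈ Finset.range b, i) * 2 : ℕ) : ℚ) := by push_cast; ring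
        _ = ((b * (b - 1) : ℕ) : ℚ) := by rw [this]
        _ = (b : ℚ) * ((b : ℚ) - 1) := by
            rw [Nat.cast_mul, Nat.cast_sub hb1, Nat.cast_one]
    linarith
  induction k with
  | zero => simp
  | succ k ih =>
    have hrec : (∑ j ∈ Finset.range (b ^ (k + 1)), (Nat.digits b j).sum)
        = b * (∑ j ∈ Finset.range (b ^ k), (Nat.digits b j).sum)
          + b ^ k * (∑ r ∈ Finset.range b, r) := by
      rw [pow_succ, sum_range_mul]
      have : ∀ q ∈ Finset.range (b ^ k), ∑ r ∈ Finset.range b, (Nat.digits b (b * q + r)).sum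
          = (∑ r ∈ Finset.range b, r) + b * (Nat.digits b q).sum := by
        intro q _
        rw [Finset.sum_congr rfl fun r hr => ds_split b q r hb (Finset.mem_range.mp hr)]
        rw [Finset.sum_add_distrib, Finset.sum_const, Finset.card_range, smul_eq_mul]
      rw [Finset.sum_congr rfl this, Finset.sum_add_distrib, Finset.sum_const,
        Finset.card_range, smul_eq_mul, ← Finset.mul_sum, add_comm]
    rw [hrec]
    push_cast [ih, hgauss]
    ring
end

section
/- For every integer n ≥ 1 and real x with 1 ≤ x ≤ n, the functions A(n,x) := Σ_{p≤x} (2/(p−1))·S_p(n)·log p and B(n,x) := Σ_{p≤x} ((n−1)/(p−1))·d_p(n)·log p satisfy log G(n,x) = A(n,x) − B(n,x), where G(n,x) := ∏_{p≤x} p^{ν_p(Ḡ_n)} and Ḡ_n = ∏_{k=0}^n C(n,k). -/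
lemma digitsum_subadd (p : ℕ) [hp : Fact p.Prime] (x y : ℕ) :
    (Nat.digits p (x + y)).sum ≤ (Nat.digits p x).sum + (Nat.digits p y).sum := by
  obtain ⟨c, hc⟩ := Nat.factorial_mul_factorial_dvd_factorial_add x y
  have hc0 : c ≠ 0 := by
    intro h
    exact (Nat.factorial_ne_zero (x + y)) (by simp [hc, h])
  have hν : padicValNat p ((x + y).factorial) =
      padicValNat p x.factorial + padicValNat p y.factorial + padicValNat p c := by
    rw [hc, padicValNat.mul (by positivity) hc0,
      padicValNat.mul (Nat.factorial_ne_zero x) (Nat.factorial_ne_zero y)]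
  have key : padicValNat p x.factorial + padicValNat p y.factorial ≤
      padicValNat p ((x + y).factorial) := by omega
  have H : (x - (Nat.digits p x).sum) + (y - (Nat.digits p y).sum) ≤
      (x + y) - (Nat.digits p (x + y)).sum := by
    rw [← sub_one_mul_padicValNat_factorial (p := p) x,
      ← sub_one_mul_padicValNat_factorial (p := p) y,
      ← sub_one_mul_padicValNat_factorial (p := p) (x + y), ← Nat.mul_add]
    exact Nat.mul_le_mul_left _ key
  have h1 := Nat.digit_sum_le p x
  have h2 := Nat.digit_sum_le p y
  have h3 := Nat.digit_sum_le p (x + y)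
  omega

lemma padic_val_central (p n : ℕ) (hp : p.Prime) (hn : 1 ≤ n) :
    ((padicValNat p (∏ k ∈ Finset.range (n + 1), n.choose k)) : ℝ) =
      2 / ((p : ℝ) - 1) * (∑ j ∈ Finset.range n, ((Nat.digits p j).sum : ℝ))
      - ((n : ℝ) - 1) / ((p : ℝ) - 1) * ((Nat.digits p n).sum : ℝ) := by
  haveI : Fact p.Prime := ⟨hp⟩
  have hν : padicValNat p (∏ k ∈ Finset.range (n + 1), n.choose k) =
      ∑ k ∈ Finset.range (n + 1), padicValNat p (n.choose k) := by
    have hne : ∀ k ∈ Finset.range (n + 1), n.choose k ≠ 0 := fun k hk =>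
      (Nat.choose_pos (Nat.lt_succ_iff.mp (Finset.mem_range.mp hk))).ne'
    have h1 := Nat.factorization_prod hne
    rw [← Nat.factorization_def _ hp, h1, Finsupp.finset_sum_apply]
    exact Finset.sum_congr rfl fun k _ => Nat.factorization_def _ hp
  have hsub : ∀ k ∈ Finset.range (n + 1),
      ((p - 1) * padicValNat p (n.choose k) : ℝ) =
        ((Nat.digits p k).sum : ℝ) + ((Nat.digits p (n - k)).sum : ℝ)
          - ((Nat.digits p n).sum : ℝ) := by
    intro k hk
    have hkn : k ≤ n := Nat.lt_succ_iff.mp (Finset.mem_range.mp hk)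
    have hK := sub_one_mul_padicValNat_choose_eq_sub_sum_digits (p := p) hkn
    have hle : (Nat.digits p n).sum ≤ (Nat.digits p k).sum + (Nat.digits p (n - k)).sum := by
      have := digitsum_subadd p k (n - k)
      rwa [Nat.add_sub_cancel' hkn] at this
    have hK' : (p - 1) * padicValNat p (n.choose k) + (Nat.digits p n).sum
        = (Nat.digits p k).sum + (Nat.digits p (n - k)).sum := by omega
    have hR := congrArg (Nat.cast : ℕ → ℝ) hK'
    push_cast [Nat.cast_sub hp.one_le] at hR ⊢
    linarith
  have hsum : (((p : ℝ) - 1) * (padicValNat p (∏ k ∈ Finset.range (n + 1), n.choose k) : ℝ)) =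
      2 * (∑ j ∈ Finset.range n, ((Nat.digits p j).sum : ℝ))
        - ((n : ℝ) - 1) * ((Nat.digits p n).sum : ℝ) := by
    rw [hν, Nat.cast_sum, Finset.mul_sum]
    rw [Finset.sum_congr rfl hsub]
    rw [Finset.sum_sub_distrib, Finset.sum_add_distrib]
    have hrefl : (∑ k ∈ Finset.range (n + 1), ((Nat.digits p (n - k)).sum : ℝ)) =
        ∑ k ∈ Finset.range (n + 1), ((Nat.digits p k).sum : ℝ) := by
      rw [← Finset.sum_range_reflect]
      refine Finset.sum_congr rfl fun k hk => ?_
      have hk' := Finset.mem_range.mp hk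
      have h : n - (n + 1 - 1 - k) = k := by omega
      rw [h]
    rw [hrefl]
    rw [Finset.sum_range_succ]
    simp only [Finset.sum_const, Finset.card_range]
    push_cast
    ring
  have hp1 : (p : ℝ) - 1 ≠ 0 := by
    have : (2 : ℝ) ≤ p := by exact_mod_cast hp.two_le
    linarith
  rw [div_mul_eq_mul_div, div_mul_eq_mul_div, div_sub_div_same, eq_div_iff hp1]
  linarith [hsum]

theorem log_G_eq_A_sub_B (n : ℕ) (hn : 1 ≤ n) (x : ℝ) (hx1 : 1 ≤ x) (hxn : x ≤ n) :
    Real.log ((∏ p ∈ (Finset.range (n + 1)).filter (fun p : ℕ => p.Prime ∧ (p : ℝ) ≤ x),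
        p ^ padicValNat p (∏ k ∈ Finset.range (n + 1), n.choose k) : ℕ)) =
      (∑ p ∈ (Finset.range (n + 1)).filter (fun p : ℕ => p.Prime ∧ (p : ℝ) ≤ x),
          2 / ((p : ℝ) - 1) * (∑ j ∈ Finset.range n, ((Nat.digits p j).sum : ℝ)) * Real.log p)
      - (∑ p ∈ (Finset.range (n + 1)).filter (fun p : ℕ => p.Prime ∧ (p : ℝ) ≤ x),
          ((n : ℝ) - 1) / ((p : ℝ) - 1) * ((Nat.digits p n).sum : ℝ) * Real.log p) := by
  rw [← Finset.sum_sub_distrib]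
  rw [Nat.cast_prod]
  simp only [Nat.cast_pow]
  rw [Real.log_prod]
  · refine Finset.sum_congr rfl fun p hp => ?_
    obtain ⟨hpn, hpp, hpx⟩ := by simpa using Finset.mem_filter.mp hp
    rw [Real.log_pow, padic_val_central p n hpp hn]
    ring
  · intro p hp
    obtain ⟨hpn, hpp, hpx⟩ := by simpa using Finset.mem_filter.mp hp
    have h0 : (0 : ℝ) < p := by exact_mod_cast hpp.pos
    positivity
end

section
/- The function f_G(α) := 1/2 + (1/2)α²⌊1/α⌋² + (1/2)α²⌊1/α⌋ − α⌊1/α⌋ (for 0 < α ≤ 1, with f_G(0) := 0) is continuous on [0,1], and f_G(1/j) = 1/(2j) for every integer j ≥ 1. -/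
noncomputable def fG (α : ℝ) : ℝ :=
  if α = 0 then 0 else
    1 / 2 + 1 / 2 * α ^ 2 * (⌊1 / α⌋ : ℝ) ^ 2 + 1 / 2 * α ^ 2 * (⌊1 / α⌋ : ℝ)
      - α * (⌊1 / α⌋ : ℝ)

noncomputable def fGaux (α : ℝ) : ℝ :=
  α / 2 + α ^ 2 / 2 * (Int.fract (1 / α) ^ 2 - Int.fract (1 / α))

lemma fG_eq_aux : fG = fGaux := by
  funext α
  by_cases hα : α = 0
  · simp [fG, fGaux, hα, Int.fract]
  · simp only [fG, fGaux, if_neg hα, Int.fract]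
    have h1 : (⌊1 / α⌋ : ℝ) = 1 / α - (1 / α - (⌊1 / α⌋ : ℝ)) := by ring
    field_simp
    ring

lemma fract_sq_sub_fract_continuous :
    Continuous (fun x : ℝ => Int.fract x ^ 2 - Int.fract x) := by
  have : Continuous ((fun t : ℝ => t ^ 2 - t) ∘ Int.fract) := by
    apply ContinuousOn.comp_fract''
    · exact (continuous_pow 2).sub continuous_id |>.continuousOn
    · norm_num
  exact this

lemma fract_bound (x : ℝ) : |Int.fract x ^ 2 - Int.fract x| ≤ 1 := by
  have h0 := Int.fract_nonneg x
  have h1 := Int.fract_lt_one x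
  rw [abs_le]
  constructor <;> nlinarith

theorem fG_continuous_and_values :
    ContinuousOn fG (Set.Icc 0 1) ∧ ∀ j : ℕ, 1 ≤ j → fG (1 / (j : ℝ)) = 1 / (2 * (j : ℝ)) := by
  constructor
  · rw [fG_eq_aux]
    intro x hx
    rcases eq_or_ne x 0 with rfl | hx0
    · -- continuity at 0 via squeeze
      unfold ContinuousWithinAt
      have h0 : fGaux 0 = 0 := by simp [fGaux]
      rw [h0]
      unfold fGaux
      have ht1 : Filter.Tendsto (fun α : ℝ => α / 2) (nhdsWithin 0 (Set.Icc 0 1)) (nhds 0) := by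
        have := (continuous_id.div_const 2).tendsto (0 : ℝ)
        simpa using this.mono_left nhdsWithin_le_nhds
      have ht2 : Filter.Tendsto
          (fun α : ℝ => α ^ 2 / 2 * (Int.fract (1 / α) ^ 2 - Int.fract (1 / α)))
          (nhdsWithin 0 (Set.Icc 0 1)) (nhds 0) := by
        apply squeeze_zero_norm' (a := fun α : ℝ => α ^ 2 / 2)
        · filter_upwards [self_mem_nhdsWithin] with α hα
          rw [Real.norm_eq_abs, abs_mul]
          have h1 : |α ^ 2 / 2| = α ^ 2 / 2 := abs_of_nonneg (by positivity)
          calc |α ^ 2 / 2| * |Int.fract (1 / α) ^ 2 - Int.fract (1 / α)|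
              ≤ |α ^ 2 / 2| * 1 := by
                exact mul_le_mul_of_nonneg_left (fract_bound _) (abs_nonneg _)
            _ = α ^ 2 / 2 := by rw [mul_one, h1]
        · have := ((continuous_pow 2).div_const 2).tendsto (0 : ℝ)
          simpa using this.mono_left nhdsWithin_le_nhds
      simpa using ht1.add ht2
    · apply ContinuousAt.continuousWithinAt
      apply ContinuousAt.add
      · exact (continuous_id.div_const 2).continuousAt
      · apply ContinuousAt.mul
        · exact ((continuous_pow 2).div_const 2).continuousAt
        · exact (fract_sq_sub_fract_continuous.continuousAt).comp
            ((continuousAt_const.div continuousAt_id hx0))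
  · intro j hj
    have hj0 : (j : ℝ) ≠ 0 := by positivity
    have h1 : (1 : ℝ) / ((1 : ℝ) / j) = (j : ℝ) := by field_simp
    have h2 : ⌊(1 : ℝ) / ((1 : ℝ) / j)⌋ = (j : ℤ) := by rw [h1]; exact Int.floor_natCast j
    have hne : (1 : ℝ) / j ≠ 0 := by positivity
    rw [fG, if_neg hne, h2]
    push_cast
    field_simp
    ring
end

section
/- For all α with 0 ≤ α ≤ 1, the function f_G(α) := 1/2 + (1/2)α²⌊1/α⌋² + (1/2)α²⌊1/α⌋ − α⌊1/α⌋ (with f_G(0) := 0) satisfies f_G(α) ≤ α/2, with equality exactly when α = 0 or α = 1/j for some integer j ≥ 1. -/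
/-!
With `n = ⌊1/α⌋`, the defect `f_G(α) - α/2` factors as `(1 - nα)(1 - (n+1)α) / 2`.
For `α > 0` the floor bounds `n ≤ 1/α < n + 1` make the first factor nonnegative and the
second negative, so the defect is `≤ 0`, and it vanishes exactly when `nα = 1`, i.e. when
`1/α` is a positive integer.
-/

theorem fG_sub_half_eq {α : ℝ} (hα : α ≠ 0) :
    fG α - α / 2 = 1 / 2 * (1 - α * ⌊1 / α⌋) * (1 - α * (⌊1 / α⌋ + 1)) := by
  simp only [fG, if_neg hα]
  ring

section FloorInv

variable {α : ℝ} (hα : 0 < α)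
include hα

theorem one_sub_mul_floor_one_div_nonneg : 0 ≤ 1 - α * ⌊1 / α⌋ := by
  have := (le_div_iff₀ hα).mp (Int.floor_le (1 / α))
  linarith

theorem one_sub_mul_floor_one_div_add_one_neg : 1 - α * (⌊1 / α⌋ + 1) < 0 := by
  have := (div_lt_iff₀ hα).mp (Int.lt_floor_add_one (1 / α))
  linarith

theorem mul_floor_one_div_eq_one_iff :
    α * ⌊1 / α⌋ = 1 ↔ ∃ j : ℕ, 1 ≤ j ∧ α = 1 / (j : ℝ) := by
  constructor
  · intro h
    have hpos : (0 : ℝ) < ⌊1 / α⌋ := pos_of_mul_pos_right (h.symm ▸ one_pos) hα.le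
    obtain ⟨j, hj⟩ := Int.eq_ofNat_of_zero_le (Int.cast_pos.mp hpos).le
    rw [hj, Int.cast_natCast] at h hpos
    exact ⟨j, by exact_mod_cast hpos, eq_one_div_of_mul_eq_one_left h⟩
  · rintro ⟨j, -, rfl⟩
    have hj : (j : ℝ) ≠ 0 := by rintro h; simp [h] at hα
    rw [one_div_one_div, Int.floor_natCast, Int.cast_natCast, one_div_mul_cancel hj]

end FloorInv

theorem fG_le_half_alpha_general (α : ℝ) (h0 : 0 ≤ α) :
    fG α ≤ α / 2 ∧ (fG α = α / 2 ↔ α = 0 ∨ ∃ j : ℕ, 1 ≤ j ∧ α = 1 / (j : ℝ)) := by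
  rcases h0.eq_or_lt with rfl | hα
  · simp [fG]
  have hdefect := fG_sub_half_eq hα.ne'
  have hfirst := one_sub_mul_floor_one_div_nonneg hα
  have hsecond := one_sub_mul_floor_one_div_add_one_neg hα
  refine ⟨by nlinarith, ?_⟩
  rw [or_iff_right hα.ne', ← mul_floor_one_div_eq_one_iff hα]
  constructor
  · intro h
    have hprod : 1 / 2 * (1 - α * ⌊1 / α⌋) * (1 - α * (⌊1 / α⌋ + 1)) = 0 := by linarith
    have hfirst_zero := (mul_eq_zero.mp hprod).resolve_right hsecond.ne
    linarith [(mul_eq_zero.mp hfirst_zero).resolve_left (by norm_num)]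
  · intro h
    rw [← sub_eq_zero, hdefect, h]
    ring

theorem fG_le_half_alpha (α : ℝ) (h0 : 0 ≤ α) (h1 : α ≤ 1) :
    fG α ≤ α / 2 ∧ (fG α = α / 2 ↔ α = 0 ∨ ∃ j : ℕ, 1 ≤ j ∧ α = 1 / (j : ℝ)) :=
  fG_le_half_alpha_general α h0
end

section
/- For every integer n ≥ 2 and every prime p with √(2n) < p ≤ 2n and every integer k ≥ 1: if 2n/(2k) < p ≤ 2n/(2k−1) then ν_p(C(2n,n)) = 1, and if 2n/(2k+1) < p ≤ 2n/(2k) then ν_p(C(2n,n)) = 0. -/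
lemma cb_val_aux (n p : ℕ) (hp : p.Prime) (hp2 : 2*n < p^2) (hn : 2 ≤ n) :
    padicValNat p ((2*n).choose n) =
      if p ≤ 2 * (n % p) then 1 else 0 := by
  haveI : Fact p.Prime := ⟨hp⟩
  have hval := padicValNat_choose (p := p) (n := 2*n) (k := n) (b := 2)
    (by omega) (Nat.log_lt_of_lt_pow (by omega) hp2)
  rw [hval, show 2*n - n = n by omega]
  rw [show Finset.Ico 1 2 = {1} from rfl, Finset.filter_singleton]
  split <;> rename_i h <;> simp [pow_one] at h <;> split <;> simp_all <;> omega

theorem central_binom_valuation (n p k : ℕ) (hn : 2 ≤ n) (hp : p.Prime)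
    (hsqrt : Real.sqrt (2 * n) < p) (hle : p ≤ 2 * n) (hk : 1 ≤ k) :
    (((2 * n : ℝ) / (2 * k) < p ∧ (p : ℝ) ≤ (2 * n : ℝ) / (2 * k - 1)) →
        padicValNat p ((2 * n).choose n) = 1) ∧
    (((2 * n : ℝ) / (2 * k + 1) < p ∧ (p : ℝ) ≤ (2 * n : ℝ) / (2 * k)) →
        padicValNat p ((2 * n).choose n) = 0) := by
  obtain ⟨m, rfl⟩ : ∃ m, k = m + 1 := ⟨k - 1, by omega⟩
  have hppos : (0:ℝ) < p := by exact_mod_cast hp.pos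
  have hp2 : 2 * n < p ^ 2 := by
    have h1 : (2 * (n:ℝ)) < (p : ℝ) ^ 2 := (Real.sqrt_lt' hppos).mp hsqrt
    exact_mod_cast h1
  have hm1 : (1:ℝ) ≤ ((m + 1 : ℕ) : ℝ) := by exact_mod_cast Nat.succ_le_succ (Nat.zero_le m)
  rw [cb_val_aux n p hp hp2 hn]
  have hq := Nat.div_add_mod n p
  have hr := Nat.mod_lt n (show 0 < p from hp.pos)
  set q := n / p with hqd
  set r := n % p with hrd
  constructor
  · rintro ⟨h1, h2⟩
    rw [div_lt_iff₀ (by positivity : (0:ℝ) < 2 * ((m + 1 : ℕ) : ℝ))] at h1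
    rw [le_div_iff₀ (by linarith : (0:ℝ) < 2 * ((m + 1 : ℕ) : ℝ) - 1)] at h2
    have h1' : 2 * n < p * (2 * m + 2) := by
      have : (2 * (n:ℝ)) < (p:ℝ) * (2 * m + 2) := by push_cast at h1 ⊢; linarith
      exact_mod_cast this
    have h2' : p * (2 * m + 1) ≤ 2 * n := by
      have : (p:ℝ) * (2 * m + 1) ≤ 2 * (n:ℝ) := by push_cast at h2 ⊢; linarith
      exact_mod_cast this
    have hql : m * p ≤ n := by nlinarith
    have hqu : n < (m + 1) * p := by nlinarith
    have hqe : q = m := Nat.div_eq_of_lt_le hql hqu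
    rw [if_pos]
    have hpq : p * m + r = n := by rw [← hqe]; exact hq
    nlinarith
  · rintro ⟨h1, h2⟩
    rw [div_lt_iff₀ (by positivity : (0:ℝ) < 2 * ((m + 1 : ℕ) : ℝ) + 1)] at h1
    rw [le_div_iff₀ (by positivity : (0:ℝ) < 2 * ((m + 1 : ℕ) : ℝ))] at h2
    have h1' : 2 * n < p * (2 * m + 3) := by
      have : (2 * (n:ℝ)) < (p:ℝ) * (2 * m + 3) := by push_cast at h1 ⊢; linarith
      exact_mod_cast this
    have h2' : p * (2 * m + 2) ≤ 2 * n := by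
      have : (p:ℝ) * (2 * m + 2) ≤ 2 * (n:ℝ) := by push_cast at h2 ⊢; linarith
      exact_mod_cast this
    have hql : (m + 1) * p ≤ n := by nlinarith
    have hqu : n < (m + 2) * p := by nlinarith
    have hqe : q = m + 1 := Nat.div_eq_of_lt_le hql hqu
    rw [if_neg]
    have hpq : p * (m + 1) + r = n := by rw [← hqe]; exact hq
    push_neg
    nlinarith
end
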